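/- arXiv:2601.08062 — 2 statements merged into one kernel-verified Lean document; each statement's English description precedes it below -/
import Mathlib

section
/- Let E¹ : ℕ × ℕ → ℚ be defined by E¹(1,0) = 1, E¹(1,g) = 0 for g ≥ 1, E¹(0,g) = 0 for all g, and for n ≥ 2 and all g ≥ 0: E¹(n,g) = (1/2)·[ Σ over compositions (c_1,c_2) of n into 2 parts and compositions (d_1,d_2) of g+2 into 2 parts of E¹(c_1,d_1−1)·E¹(c_2,d_2−1) + (if n and g are both even then E¹(n/2,g/2) else 0) + Σ_{k=3}^{n} (k−2)·Σ over compositions (c_1,…,c_{k−1}) of n−1 into k−1 parts and compositions (d_1,…,d_{k−1}) of g−1+(k−1) into k−1 parts of Π_{i=1}^{k−1} E¹(c_i,d_i−1) + (if n and g are both odd then Σ_{a=1}^{(n−1)/2} Σ over compositions (c_1,…,c_a) of (n−1)/2 into a parts and compositions (d_1,…,d_a) of (g−1)/2 + a into a parts of Π_{i=1}^{a} E¹(c_i,d_i−1) else 0) ]. (This recursion counts unlabeled simplex time-consistent galled trees with n leaves and g galls.) Let U : ℕ → ℚ be the Wedderburn–Etherington sequence: U(0) = 0, U(1) = 1, and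 for n ≥ 2, U(n) = (1/2)·(Σ_{m=1}^{n−1} U(m)·U(n−m) + (if n is even then U(n/2) else 0)). Then for every integer m ≥ 0, E¹(2m+1, m) = U(m+1). -/
/-!
Strong induction on the number of leaves `n` proves simultaneously that `E¹(n, g) = 0` whenever
`n ≤ 2g`, and that `E¹(2g+1, g) = U(g+1)`. A product `∏ E¹(cᵢ, dᵢ - 1)` over compositions with
`∑ cᵢ + b < 2 ∑ dᵢ` has a factor below the diagonal, hence vanishes; this kills every term of
the recursion for `n ≤ 2g`. On the diagonal `n = 2g+1` only two kinds of terms survive: the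
`k = 3` term, whose only nonzero summands pair two diagonal values and give the convolution
`∑ U(m) U(g+1-m)`, and, for odd `g`, the `a = 1` term `E¹(g, (g-1)/2) = U((g+1)/2)`. Together
they are exactly the Wedderburn–Etherington recursion for `U(g+1)`.
-/

open Finset

/-- The compositions of `a` into `b` (positive) parts, as functions `Fin b → ℕ`.
Every part of a composition of `a` lies in `[1, a]`, so filtering inside
`Finset.Icc 1 a` captures all compositions. -/
def compositions (a b : ℕ) : Finset (Fin b → ℕ) :=
  (Fintype.piFinset fun _ => Finset.Icc 1 a).filter fun c => ∑ i, c i = a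

lemma mem_compositions {a b : ℕ} {c : Fin b → ℕ} :
    c ∈ compositions a b ↔ (∀ i, 1 ≤ c i ∧ c i ≤ a) ∧ ∑ i, c i = a := by
  simp [compositions, Fintype.mem_piFinset]

lemma add_le_of_mem_compositions {a b : ℕ} {c : Fin b → ℕ} (hc : c ∈ compositions a b)
    (i : Fin b) : c i + (b - 1) ≤ a := by
  obtain ⟨hpos, hsum⟩ := mem_compositions.1 hc
  have hrest : b - 1 ≤ ∑ j ∈ univ.erase i, c j := by
    simpa [card_erase_of_mem (mem_univ i)] using
      card_nsmul_le_sum (univ.erase i) c 1 fun j _ => (hpos j).1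
  rw [← add_sum_erase univ c (mem_univ i)] at hsum
  omega

lemma compositions_one {a : ℕ} (ha : 1 ≤ a) : compositions a 1 = {fun _ => a} := by
  ext c
  simp only [mem_compositions, mem_singleton, Fin.sum_univ_one]
  constructor
  · rintro ⟨-, hc⟩
    funext i
    rwa [Subsingleton.elim i 0]
  · rintro rfl
    exact ⟨fun _ => ⟨ha, le_rfl⟩, rfl⟩

lemma eq_of_mem_compositions_two {a : ℕ} {c : Fin 2 → ℕ} (hc : c ∈ compositions a 2) :
    c = ![c 0, a - c 0] := by
  obtain ⟨-, hsum⟩ := mem_compositions.1 hc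
  rw [Fin.sum_univ_two] at hsum
  ext i
  fin_cases i
  · rfl
  · simp only [Fin.mk_one, Matrix.cons_val_one, Matrix.cons_val_fin_one]
    omega

lemma sum_compositions_two {M : Type*} [AddCommMonoid M] (a : ℕ) (F : (Fin 2 → ℕ) → M) :
    ∑ c ∈ compositions a 2, F c = ∑ m ∈ Ico 1 a, F ![m, a - m] := by
  refine sum_nbij' (fun c => c 0) (fun m => ![m, a - m]) ?_ ?_
    (fun c hc => (eq_of_mem_compositions_two hc).symm) (fun m _ => rfl)
    (fun c hc => congrArg F (eq_of_mem_compositions_two hc))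
  · intro c hc
    obtain ⟨hpos, hsum⟩ := mem_compositions.1 hc
    rw [Fin.sum_univ_two] at hsum
    have := (hpos 0).1; have := (hpos 1).1
    simp only [mem_Ico]
    omega
  · intro m hm
    simp only [mem_Ico] at hm
    simp only [mem_compositions, Fin.forall_fin_two, Fin.sum_univ_two,
      Matrix.cons_val_zero, Matrix.cons_val_one]
    omega

section CompositionSum

variable {R : Type*} [CommSemiring R]

def compositionSum (f : ℕ → ℕ → R) (b a e : ℕ) : R :=
  ∑ c ∈ compositions a b, ∑ d ∈ compositions e b, ∏ i, f (c i) (d i - 1)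

lemma prod_eq_zero_of_sum_lt {f : ℕ → ℕ → R} {n b : ℕ}
    (hf : ∀ p < n, ∀ q, p ≤ 2 * q → f p q = 0) {c d : Fin b → ℕ} (hc : ∀ i, c i < n)
    (hd : ∀ i, 1 ≤ d i) (hlt : ∑ i, c i + b < 2 * ∑ i, d i) :
    ∏ i, f (c i) (d i - 1) = 0 := by
  obtain ⟨i, hi⟩ : ∃ i, c i + 1 < 2 * d i := by
    by_contra! h
    have := sum_le_sum fun i (_ : i ∈ univ) => h i
    rw [← mul_sum, sum_add_distrib] at this
    simp only [sum_const, card_univ, Fintype.card_fin, smul_eq_mul, mul_one] at this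
    omega
  exact prod_eq_zero (mem_univ i) (hf _ (hc i) _ (by have := hd i; omega))

lemma compositionSum_eq_zero {f : ℕ → ℕ → R} {n b a e : ℕ}
    (hf : ∀ p < n, ∀ q, p ≤ 2 * q → f p q = 0) (ha : a + 1 < n + b) (hae : a + b < 2 * e) :
    compositionSum f b a e = 0 := by
  refine sum_eq_zero fun c hc => sum_eq_zero fun d hd => ?_
  refine prod_eq_zero_of_sum_lt hf (fun i => ?_) (fun i => ((mem_compositions.1 hd).1 i).1) ?_
  · have := add_le_of_mem_compositions hc i
    omega
  · rw [(mem_compositions.1 hc).2, (mem_compositions.1 hd).2]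
    exact hae

lemma compositionSum_one (f : ℕ → ℕ → R) {a e : ℕ} (ha : 1 ≤ a) (he : 1 ≤ e) :
    compositionSum f 1 a e = f a (e - 1) := by
  simp [compositionSum, compositions_one ha, compositions_one he]

/-- Of the summands of `compositionSum f 2 (2g) (g+1)` only those pairing two diagonal values
`f (2q-1) (q-1) * f (2(g-q)+1) (g-q)` survive. -/
lemma compositionSum_two_diagonal {f : ℕ → ℕ → R} {u : ℕ → R} (g : ℕ)
    (hf : ∀ p < 2 * g + 1, ∀ q, p ≤ 2 * q → f p q = 0)
    (hdiag : ∀ q, 2 * q + 1 < 2 * g + 1 → f (2 * q + 1) q = u (q + 1)) :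
    compositionSum f 2 (2 * g) (g + 1) = ∑ m ∈ Ico 1 (g + 1), u m * u (g + 1 - m) := by
  simp only [compositionSum, sum_compositions_two, Fin.prod_univ_two, Matrix.cons_val_zero,
    Matrix.cons_val_one]
  rw [sum_comm]
  refine sum_congr rfl fun q hq => ?_
  simp only [mem_Ico] at hq
  have hoff : ∀ p ∈ Ico 1 (2 * g), p ≠ 2 * q - 1 →
      f p (q - 1) * f (2 * g - p) (g + 1 - q - 1) = 0 := by
    intro p hp hpq
    simp only [mem_Ico] at hp
    rcases le_or_gt p (2 * (q - 1)) with h | h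
    · rw [hf p (by omega) _ h, zero_mul]
    · rw [hf (2 * g - p) (by omega) _ (by omega), mul_zero]
  rw [sum_eq_single_of_mem _ (by rw [mem_Ico]; omega) hoff]
  have hleft := hdiag (q - 1) (by omega)
  have hright := hdiag (g - q) (by omega)
  rw [show 2 * (q - 1) + 1 = 2 * q - 1 by omega, show q - 1 + 1 = q by omega] at hleft
  rw [show 2 * (g - q) + 1 = 2 * g - (2 * q - 1) by omega, show g - q + 1 = g + 1 - q by omega,
    show g - q = g + 1 - q - 1 by omega] at hright
  rw [hleft, hright]

end CompositionSum

def galledTreeRecursion (E : ℕ → ℕ → ℚ) (n g : ℕ) : ℚ :=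
  (1 / 2) *
    (compositionSum E 2 n (g + 2)
     + (if Even n ∧ Even g then E (n / 2) (g / 2) else 0)
     + (∑ k ∈ Icc 3 n, ((k : ℚ) - 2) * compositionSum E (k - 1) (n - 1) (g + (k - 1) - 1))
     + (if Odd n ∧ Odd g then
         ∑ a ∈ Icc 1 ((n - 1) / 2), compositionSum E a ((n - 1) / 2) ((g - 1) / 2 + a)
       else 0))

lemma galledTreeRecursion_eq_zero {E : ℕ → ℕ → ℚ} {n g : ℕ}
    (hE : ∀ p < n, ∀ q, p ≤ 2 * q → E p q = 0) (hn : 2 ≤ n) (hng : n ≤ 2 * g) :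
    galledTreeRecursion E n g = 0 := by
  have hhalf : (if Even n ∧ Even g then E (n / 2) (g / 2) else 0) = 0 := by
    split_ifs with h
    · obtain ⟨⟨r, rfl⟩, ⟨s, rfl⟩⟩ := h
      exact hE _ (by omega) _ (by omega)
    · rfl
  have hchains : ∑ k ∈ Icc 3 n, ((k : ℚ) - 2) * compositionSum E (k - 1) (n - 1) (g + (k - 1) - 1)
      = 0 := by
    refine sum_eq_zero fun k hk => ?_
    simp only [mem_Icc] at hk
    rw [compositionSum_eq_zero hE (by omega) (by omega), mul_zero]
  have hodd : (if Odd n ∧ Odd g then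
      ∑ a ∈ Icc 1 ((n - 1) / 2), compositionSum E a ((n - 1) / 2) ((g - 1) / 2 + a) else 0)
      = 0 := by
    split_ifs with h
    · obtain ⟨-, ⟨s, rfl⟩⟩ := h
      refine sum_eq_zero fun a ha => ?_
      simp only [mem_Icc] at ha
      exact compositionSum_eq_zero hE (by omega) (by omega)
    · rfl
  rw [galledTreeRecursion, compositionSum_eq_zero hE (by omega) (by omega), hhalf, hchains, hodd]
  norm_num

lemma galledTreeRecursion_diagonal {E : ℕ → ℕ → ℚ} {U : ℕ → ℚ} (g : ℕ)
    (hE : ∀ p < 2 * g + 1, ∀ q, p ≤ 2 * q → E p q = 0)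
    (hdiag : ∀ q, 2 * q + 1 < 2 * g + 1 → E (2 * q + 1) q = U (q + 1)) :
    galledTreeRecursion E (2 * g + 1) g =
      (1 / 2) * ((∑ m ∈ Ico 1 (g + 1), U m * U (g + 1 - m))
        + if Even (g + 1) then U ((g + 1) / 2) else 0) := by
  have hhalf : (if Even (2 * g + 1) ∧ Even g then E ((2 * g + 1) / 2) (g / 2) else 0) = 0 :=
    if_neg fun h => Nat.not_even_two_mul_add_one g h.1
  have hchains : ∑ k ∈ Icc 3 (2 * g + 1),
      ((k : ℚ) - 2) * compositionSum E (k - 1) (2 * g + 1 - 1) (g + (k - 1) - 1)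
      = ∑ m ∈ Ico 1 (g + 1), U m * U (g + 1 - m) := by
    rcases Nat.eq_zero_or_pos g with rfl | hg
    · simp
    have hlong : ∀ k ∈ Icc 3 (2 * g + 1), k ≠ 3 →
        ((k : ℚ) - 2) * compositionSum E (k - 1) (2 * g + 1 - 1) (g + (k - 1) - 1) = 0 := by
      intro k hk hk3
      simp only [mem_Icc] at hk
      rw [compositionSum_eq_zero hE (by omega) (by omega), mul_zero]
    rw [sum_eq_single_of_mem 3 (by rw [mem_Icc]; omega) hlong,
      show g + (3 - 1) - 1 = g + 1 by omega, Nat.add_sub_cancel,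
      compositionSum_two_diagonal g hE hdiag]
    norm_num
  have hodd : (if Odd (2 * g + 1) ∧ Odd g then
      ∑ a ∈ Icc 1 ((2 * g + 1 - 1) / 2), compositionSum E a ((2 * g + 1 - 1) / 2) ((g - 1) / 2 + a)
      else 0) = if Even (g + 1) then U ((g + 1) / 2) else 0 := by
    simp only [odd_two_mul_add_one, true_and, Nat.even_add_one, Nat.not_even_iff_odd,
      Nat.add_sub_cancel, Nat.mul_div_cancel_left _ two_pos]
    split_ifs with hg
    · obtain ⟨s, rfl⟩ := hg
      have hlong : ∀ a ∈ Icc 1 (2 * s + 1), a ≠ 1 →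
          compositionSum E a (2 * s + 1) ((2 * s + 1 - 1) / 2 + a) = 0 := by
        intro a ha ha1
        simp only [mem_Icc] at ha
        exact compositionSum_eq_zero hE (by omega) (by omega)
      rw [sum_eq_single_of_mem 1 (by rw [mem_Icc]; omega) hlong,
        compositionSum_one E (by omega) (by omega)]
      convert hdiag s (by omega) using 2 <;> omega
    · rfl
  rw [galledTreeRecursion, compositionSum_eq_zero hE (by omega) (by omega), hhalf, hchains, hodd]
  ring

theorem stmt11_general (E : ℕ → ℕ → ℚ) (U : ℕ → ℚ)
    (h10 : E 1 0 = 1)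
    (h1g : ∀ g, 1 ≤ g → E 1 g = 0)
    (h0g : ∀ g, E 0 g = 0)
    (hrec : ∀ n g, 2 ≤ n →
      E n g = (1 / 2) *
        ((∑ c ∈ compositions n 2, ∑ d ∈ compositions (g + 2) 2,
            ∏ i : Fin 2, E (c i) (d i - 1))
         + (if Even n ∧ Even g then E (n / 2) (g / 2) else 0)
         + (∑ k ∈ Finset.Icc 3 n, ((k : ℚ) - 2) *
             ∑ c ∈ compositions (n - 1) (k - 1),
               ∑ d ∈ compositions (g + (k - 1) - 1) (k - 1),
                 ∏ i : Fin (k - 1), E (c i) (d i - 1))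
         + (if Odd n ∧ Odd g then
             ∑ a ∈ Finset.Icc 1 ((n - 1) / 2),
               ∑ c ∈ compositions ((n - 1) / 2) a,
                 ∑ d ∈ compositions ((g - 1) / 2 + a) a,
                   ∏ i : Fin a, E (c i) (d i - 1)
           else 0)))
    (hU1 : U 1 = 1)
    (hUrec : ∀ n, 2 ≤ n →
      U n = (1 / 2) * ((∑ m ∈ Finset.Ico 1 n, U m * U (n - m))
        + if Even n then U (n / 2) else 0)) :
    ∀ m : ℕ, E (2 * m + 1) m = U (m + 1) := by
  have hE_rec : ∀ n g, 2 ≤ n → E n g = galledTreeRecursion E n g := hrec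
  suffices h : ∀ n, (∀ g, n ≤ 2 * g → E n g = 0) ∧ (∀ g, n = 2 * g + 1 → E n g = U (g + 1)) from
    fun m => (h _).2 m rfl
  intro n
  induction n using Nat.strong_induction_on with
  | _ n ih =>
  have hE : ∀ p < n, ∀ q, p ≤ 2 * q → E p q = 0 := fun p hp => (ih p hp).1
  refine ⟨fun g hng => ?_, fun g hng => ?_⟩
  · rcases lt_or_ge n 2 with hn | hn
    · interval_cases n
      exacts [h0g g, h1g g (by omega)]
    · exact (hE_rec n g hn).trans (galledTreeRecursion_eq_zero hE hn hng)
  · subst hng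
    rcases Nat.eq_zero_or_pos g with rfl | hg
    · rw [h10, hU1]
    · rw [hE_rec _ g (by omega), galledTreeRecursion_diagonal g hE fun q hq => (ih _ hq).2 q rfl,
        hUrec (g + 1) (by omega)]

/-- If `E¹ : ℕ × ℕ → ℚ` satisfies the recursion counting unlabeled simplex time-consistent
galled trees with `n` leaves and `g` galls, and `U` is the Wedderburn–Etherington sequence,
then `E¹(2m+1, m) = U(m+1)` for all `m ≥ 0`. -/
theorem stmt11 (E : ℕ → ℕ → ℚ) (U : ℕ → ℚ)
    (h10 : E 1 0 = 1)
    (h1g : ∀ g, 1 ≤ g → E 1 g = 0)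
    (h0g : ∀ g, E 0 g = 0)
    (hrec : ∀ n g, 2 ≤ n →
      E n g = (1 / 2) *
        ((∑ c ∈ compositions n 2, ∑ d ∈ compositions (g + 2) 2,
            ∏ i : Fin 2, E (c i) (d i - 1))
         + (if Even n ∧ Even g then E (n / 2) (g / 2) else 0)
         + (∑ k ∈ Finset.Icc 3 n, ((k : ℚ) - 2) *
             ∑ c ∈ compositions (n - 1) (k - 1),
               ∑ d ∈ compositions (g + (k - 1) - 1) (k - 1),
                 ∏ i : Fin (k - 1), E (c i) (d i - 1))
         + (if Odd n ∧ Odd g then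
             ∑ a ∈ Finset.Icc 1 ((n - 1) / 2),
               ∑ c ∈ compositions ((n - 1) / 2) a,
                 ∑ d ∈ compositions ((g - 1) / 2 + a) a,
                   ∏ i : Fin a, E (c i) (d i - 1)
           else 0)))
    (hU0 : U 0 = 0)
    (hU1 : U 1 = 1)
    (hUrec : ∀ n, 2 ≤ n →
      U n = (1 / 2) * ((∑ m ∈ Finset.Ico 1 n, U m * U (n - m))
        + if Even n then U (n / 2) else 0)) :
    ∀ m : ℕ, E (2 * m + 1) m = U (m + 1) :=
  stmt11_general E U h10 h1g h0g hrec hU1 hUrec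
end

section
/- Let h(t) = t·(1 − √(1−2t))^2 / (2·(1−2t)^{3/2}) and let f : ℝ → ℝ be given by f(t) = h(t)^2/(2·√(1−2t)) + t·h(t)·(1 − √(1−2t))/(1−2t)^2 for t < 1/2. Then the sequence n ↦ f^{(n)}(0) of iterated derivatives of f at 0 is asymptotically equivalent, as n → ∞, to the sequence n ↦ (1/(3√π))·n^{5/2}·2^{n−2}·n!. (The quantity f^{(n)}(0) equals the number e¹_{n,2} of leaf-labeled simplex time-consistent galled trees with n leaves and exactly two galls.) -/
/-- `h(t) = 𝔈₁¹(t) = t·(1 − √(1−2t))² / (2·(1−2t)^{3/2})`. -/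
noncomputable def h15 : ℝ → ℝ := fun t =>
  t * (1 - Real.sqrt (1 - 2 * t)) ^ 2 / (2 * (1 - 2 * t) ^ ((3 : ℝ) / 2))

/-- `f(t) = 𝔈₂¹(t) = h(t)²/(2·√(1−2t)) + t·h(t)·(1 − √(1−2t))/(1−2t)²`. -/
noncomputable def f15 : ℝ → ℝ := fun t =>
  h15 t ^ 2 / (2 * Real.sqrt (1 - 2 * t))
    + t * h15 t * (1 - Real.sqrt (1 - 2 * t)) / (1 - 2 * t) ^ 2

/-!
In the variable `u = √(1-2t)` the function `f` is a Laurent polynomial, so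
`f(t) = ∑ₖ cₖ (1-2t)^{-σₖ}` with half-integers `σₖ ≤ 7/2`. The `n`-th derivative at `0` of
`(1-2t)^{-σ}` is `2ⁿ σ(σ+1)⋯(σ+n-1)`, and by Euler's limit formula for `Γ` this rising factorial
is asymptotic to `n^{σ-1} n! / Γ(σ)`. Only the term `σ = 7/2`, with coefficient `5/32`, survives
in the limit, and `(5/32) / Γ(7/2) = 1 / (12√π)`.
-/

open Filter Finset Real Topology Polynomial Asymptotics
open scoped Nat

lemma ascPochhammer_eval_eq_prod_range {R : Type*} [CommSemiring R] (n : ℕ) (r : R) :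
    (ascPochhammer R n).eval r = ∏ j ∈ range n, (r + j) := by
  induction n with
  | zero => simp
  | succ n ih => simp [ascPochhammer_succ_right, ih, prod_range_succ]

/-- At the poles of `Γ` both sides vanish: the rising factorial is eventually `0`, and so is the
junk value `(Real.Gamma s)⁻¹ = 0⁻¹`. -/
theorem tendsto_ascPochhammer_div_rpow_mul_factorial (s : ℝ) :
    Tendsto (fun n : ℕ => (ascPochhammer ℝ n).eval s / ((n : ℝ) ^ (s - 1) * n !)) atTop
      (𝓝 (Gamma s)⁻¹) := by
  by_cases hΓ : Gamma s = 0
  · obtain ⟨m, rfl⟩ := (Gamma_eq_zero_iff s).mp hΓ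
    rw [hΓ, inv_zero]
    refine tendsto_const_nhds.congr' ?_
    filter_upwards [eventually_gt_atTop m] with n hn
    rw [(ascPochhammer_eval_eq_zero_iff n _).mpr ⟨m, hn, by simp⟩, zero_div]
  · refine ((tendsto_natCast_div_add_atTop s).div (GammaSeq_tendsto_Gamma s) hΓ
      |>.congr' ?_).trans (by rw [one_div])
    filter_upwards [eventually_gt_atTop ⌈-s⌉₊, eventually_ne_atTop 0] with n hsn hn
    have hn' : (0 : ℝ) < n := by positivity
    have hsn' : (n : ℝ) + s ≠ 0 := by
      have := Nat.lt_of_ceil_lt hsn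
      linarith
    simp only [Pi.div_apply, GammaSeq]
    rw [prod_range_succ, ← ascPochhammer_eval_eq_prod_range, rpow_sub_one hn'.ne']
    field_simp
    ring

theorem isEquivalent_ascPochhammer {s : ℝ} (hs : Gamma s ≠ 0) :
    (fun n : ℕ => (ascPochhammer ℝ n).eval s) ~[atTop]
      fun n => (Gamma s)⁻¹ * ((n : ℝ) ^ (s - 1) * n !) := by
  refine isEquivalent_of_tendsto_one ?_
  have := (tendsto_ascPochhammer_div_rpow_mul_factorial s).div_const (Gamma s)⁻¹
  rw [div_self (inv_ne_zero hs)] at this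
  refine this.congr fun n => ?_
  rw [Pi.div_apply]
  ring

theorem isLittleO_ascPochhammer {s t : ℝ} (hst : s < t) :
    (fun n : ℕ => (ascPochhammer ℝ n).eval s) =o[atTop] fun n => (n : ℝ) ^ (t - 1) * n ! := by
  have hpow : Tendsto (fun n : ℕ => (n : ℝ) ^ (-(t - s))) atTop (𝓝 0) :=
    (tendsto_rpow_neg_atTop (sub_pos.mpr hst)).comp tendsto_natCast_atTop_atTop
  have hlim := (tendsto_ascPochhammer_div_rpow_mul_factorial s).mul hpow
  rw [mul_zero] at hlim
  have hpos : ∀ᶠ n : ℕ in atTop, (0 : ℝ) < n :=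
    (eventually_gt_atTop 0).mono fun n hn => by exact_mod_cast hn
  refine isLittleO_of_tendsto' (hpos.mono fun n hn h => ?_) (hlim.congr' ?_)
  · exact absurd h (by positivity)
  filter_upwards [hpos] with n hn
  rw [rpow_neg hn.le, show t - 1 = (s - 1) + (t - s) by ring, rpow_add hn]
  field_simp

theorem isEquivalent_sum_const_mul_ascPochhammer {ι : Type*} {I : Finset ι} {c σ : ι → ℝ}
    {i₀ : ι} (hi₀ : i₀ ∈ I) (hc : c i₀ ≠ 0) (hΓ : Gamma (σ i₀) ≠ 0)
    (hσ : ∀ i ∈ I, i ≠ i₀ → σ i < σ i₀) :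
    (fun n : ℕ => ∑ i ∈ I, c i * (ascPochhammer ℝ n).eval (σ i)) ~[atTop]
      fun n => c i₀ * (Gamma (σ i₀))⁻¹ * ((n : ℝ) ^ (σ i₀ - 1) * n !) := by
  classical
  have hmain : (fun n : ℕ => c i₀ * (ascPochhammer ℝ n).eval (σ i₀)) ~[atTop]
      fun n => c i₀ * (Gamma (σ i₀))⁻¹ * ((n : ℝ) ^ (σ i₀ - 1) * n !) := by
    simpa only [Pi.mul_def, mul_assoc] using
      (IsEquivalent.refl (u := fun _ : ℕ => c i₀)).mul (isEquivalent_ascPochhammer hΓ)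
  have hrest : (fun n : ℕ => ∑ i ∈ I.erase i₀, c i * (ascPochhammer ℝ n).eval (σ i)) =o[atTop]
      fun n => c i₀ * (Gamma (σ i₀))⁻¹ * ((n : ℝ) ^ (σ i₀ - 1) * n !) := by
    refine (isLittleO_const_mul_right_iff (mul_ne_zero hc (inv_ne_zero hΓ))).mpr ?_
    refine IsLittleO.fun_sum fun i hi => (isLittleO_ascPochhammer ?_).const_mul_left (c i)
    exact hσ i (mem_of_mem_erase hi) (ne_of_mem_erase hi)
  simpa only [← add_sum_erase I _ hi₀, Pi.add_def] using hmain.add_isLittleO hrest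

theorem iteratedDeriv_sub_mul_rpow (a b r : ℝ) (n : ℕ) {t : ℝ} (ht : 0 < a - b * t) :
    iteratedDeriv n (fun t => (a - b * t) ^ r) t
      = (-b) ^ n * (descPochhammer ℝ n).eval r * (a - b * t) ^ (r - n) := by
  induction n generalizing t with
  | zero => simp
  | succ n ih =>
    have hopen : IsOpen {t : ℝ | 0 < a - b * t} := isOpen_lt continuous_const (by fun_prop)
    have heq := eventuallyEq_of_mem (hopen.mem_nhds ht) fun s hs => ih hs
    rw [iteratedDeriv_succ, heq.deriv_eq]
    have hd : HasDerivAt (fun t => a - b * t) (-b) t := by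
      simpa using ((hasDerivAt_id t).const_mul b).const_sub a
    rw [((hd.rpow_const (Or.inl ht.ne')).const_mul _).deriv, descPochhammer_succ_eval,
      Nat.cast_succ, sub_sub]
    ring

theorem iteratedDeriv_one_sub_mul_rpow_neg_zero (b s : ℝ) (n : ℕ) :
    iteratedDeriv n (fun t => (1 - b * t) ^ (-s)) 0 = b ^ n * (ascPochhammer ℝ n).eval s := by
  rw [iteratedDeriv_sub_mul_rpow 1 b (-s) n (by simp), ← neg_neg s,
    ascPochhammer_eval_neg_eq_descPochhammer]
  simp only [mul_zero, sub_zero, one_rpow, mul_one, neg_neg, neg_pow b]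
  ring

noncomputable def f15Coeff : Fin 8 → ℝ := ![5/32, -1/2, 1/4, 3/4, -15/16, 1/2, -1/4, 1/32]

def f15HalfExponent : Fin 8 → ℤ := ![7, 6, 5, 4, 3, 1, 0, -1]

theorem f15_eq_sum {t : ℝ} (ht : t < 1 / 2) :
    f15 t = ∑ k, f15Coeff k * (1 - 2 * t) ^ (-((f15HalfExponent k : ℝ) / 2)) := by
  have hpos : 0 < 1 - 2 * t := by linarith
  have hsqrt : ∀ m : ℤ, (1 - 2 * t) ^ (-((m : ℝ) / 2)) = √(1 - 2 * t) ^ (-m) := fun m => by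
    rw [← neg_div, ← Int.cast_neg, rpow_div_two_eq_sqrt _ hpos.le, rpow_intCast]
  have h32 : (1 - 2 * t) ^ ((3 : ℝ) / 2) = √(1 - 2 * t) ^ 3 := by
    rw [rpow_div_two_eq_sqrt _ hpos.le]; norm_cast
  have hsq : √(1 - 2 * t) ^ 2 = 1 - 2 * t := sq_sqrt hpos.le
  have hne : √(1 - 2 * t) ≠ 0 := (sqrt_pos.mpr hpos).ne'
  simp only [hsqrt, f15, h15, h32, Fin.sum_univ_succ, Fin.sum_univ_zero, f15Coeff,
    f15HalfExponent, Matrix.cons_val_zero, Matrix.cons_val_succ]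
  set u := √(1 - 2 * t)
  rw [show t = (1 - u ^ 2) / 2 by rw [hsq]; ring]
  norm_num
  field_simp
  ring

theorem iteratedDeriv_f15_zero (n : ℕ) :
    iteratedDeriv n f15 0
      = 2 ^ n * ∑ k, f15Coeff k * (ascPochhammer ℝ n).eval ((f15HalfExponent k : ℝ) / 2) := by
  have hf : f15 =ᶠ[𝓝 0]
      fun t => ∑ k, f15Coeff k * (1 - 2 * t) ^ (-((f15HalfExponent k : ℝ) / 2)) :=
    (eventually_lt_nhds (by norm_num : (0 : ℝ) < 1 / 2)).mono fun t ht => f15_eq_sum ht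
  rw [hf.iteratedDeriv_eq, iteratedDeriv_fun_sum, mul_sum]
  · simp only [iteratedDeriv_const_mul_field, iteratedDeriv_one_sub_mul_rpow_neg_zero]
    exact sum_congr rfl fun k _ => by ring
  · intro k _
    exact contDiffAt_const.mul <|
      (contDiffAt_const.sub (contDiffAt_const.mul contDiffAt_id)).rpow_const_of_ne (by norm_num)

theorem Gamma_seven_halves : Gamma (7 / 2) = 15 / 8 * √π := by
  rw [show (7 / 2 : ℝ) = 1 / 2 + 1 + 1 + 1 by norm_num, Gamma_add_one (by norm_num),
    Gamma_add_one (by norm_num), Gamma_add_one (by norm_num), Gamma_one_half_eq]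
  ring

/-- The sequence `n ↦ f15⁽ⁿ⁾(0)` (the number of leaf-labeled simplex time-consistent galled
trees with `n` leaves and two galls) is asymptotically equivalent to
`n ↦ (1/(3√π))·n^{5/2}·2^{n−2}·n!` as `n → ∞`. -/
theorem stmt15 :
    Asymptotics.IsEquivalent Filter.atTop
      (fun n : ℕ => iteratedDeriv n f15 0)
      (fun n : ℕ => (1 / (3 * Real.sqrt Real.pi)) * (n : ℝ) ^ ((5 : ℝ) / 2)
        * (2 : ℝ) ^ ((n : ℝ) - 2) * (Nat.factorial n : ℝ)) := by
  have hsum := isEquivalent_sum_const_mul_ascPochhammer (I := univ) (c := f15Coeff)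
    (σ := fun k => (f15HalfExponent k : ℝ) / 2) (mem_univ 0) (by norm_num [f15Coeff])
    (Gamma_pos_of_pos (by norm_num [f15HalfExponent])).ne'
    (by intro k _ hk; fin_cases k <;> norm_num [f15HalfExponent] at *)
  refine ((IsEquivalent.refl (u := fun n : ℕ => (2 : ℝ) ^ n)).mul hsum).congr_left ?_
    |>.congr_right ?_
  · exact Eventually.of_forall fun n => (iteratedDeriv_f15_zero n).symm
  · refine Eventually.of_forall fun n => ?_
    simp only [Pi.mul_apply, f15Coeff, f15HalfExponent, Matrix.cons_val_zero,
      rpow_sub two_pos, rpow_natCast]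
    norm_num [Gamma_seven_halves]
    field_simp
    ring
end
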